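/- Let G be a simple graph on a finite vertex set and let f be a strong integer additive set-labeling of G. Then f is also a strong integer additive set-labeling of the complement graph Ḡ if and only if the difference sets D_{f(v)} of the set-labels of the vertices of G are pairwise disjoint, i.e., D_{f(u)} ∩ D_{f(v)} = ∅ for all distinct vertices u, v. -/

import Mathlib

open Finset Pointwise

/-- The difference set of a finset of naturals:
the set of positive differences of distinct elements. -/
def diffSet (A : Finset ℕ) : Finset ℕ :=
  ((A ×ˢ A).filter fun p => p.2 < p.1).image fun p => p.1 - p.2

/-- `f` is a strong integer additive set-labeling of `G`. -/
def IsStrongIASL {V : Type*} (G : SimpleGraph V) (f : V → Finset ℕ) : Prop :=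
  (∀ v, (f v).Nonempty) ∧ Function.Injective f ∧
    ∀ u v, G.Adj u v → (f u + f v).card = (f u).card * (f v).card

/-! A sumset `A + B` has the full size `|A| |B|` exactly when no sum `a + b` arises twice, and
a coincidence `a + b = a' + b'` with `a' < a` is the same thing as the common difference
`a - a' = b' - b` of `A` and `B`. The theorem follows by applying this to the edges of `G` and
of `Ḡ`, which together cover all pairs of distinct vertices. -/

lemma mem_diffSet {A : Finset ℕ} {d : ℕ} :
    d ∈ diffSet A ↔ ∃ a ∈ A, ∃ b ∈ A, b < a ∧ a - b = d := by
  simp only [diffSet, mem_image, mem_filter, mem_product, Prod.exists]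
  constructor
  · rintro ⟨a, b, ⟨⟨ha, hb⟩, hlt⟩, rfl⟩
    exact ⟨a, ha, b, hb, hlt, rfl⟩
  · rintro ⟨a, ha, b, hb, hlt, rfl⟩
    exact ⟨a, b, ⟨⟨ha, hb⟩, hlt⟩, rfl⟩

lemma not_disjoint_diffSet_iff {A B : Finset ℕ} :
    ¬Disjoint (diffSet A) (diffSet B) ↔
      ∃ a ∈ A, ∃ a' ∈ A, ∃ b ∈ B, ∃ b' ∈ B, a' < a ∧ a + b = a' + b' := by
  rw [not_disjoint_iff]
  constructor
  · rintro ⟨d, hdA, hdB⟩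
    obtain ⟨a, ha, a', ha', hlt, rfl⟩ := mem_diffSet.mp hdA
    obtain ⟨b', hb', b, hb, hlt', hd⟩ := mem_diffSet.mp hdB
    exact ⟨a, ha, a', ha', b, hb, b', hb', hlt, by omega⟩
  · rintro ⟨a, ha, a', ha', b, hb, b', hb', hlt, hsum⟩
    exact ⟨a - a', mem_diffSet.mpr ⟨a, ha, a', ha', hlt, rfl⟩,
      mem_diffSet.mpr ⟨b', hb', b, hb, by omega, by omega⟩⟩

lemma injOn_add_iff_disjoint_diffSet {A B : Finset ℕ} :
    (A ×ˢ B : Set (ℕ × ℕ)).InjOn (fun p => p.1 + p.2) ↔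
      Disjoint (diffSet A) (diffSet B) := by
  constructor
  · intro hinj
    by_contra hAB
    obtain ⟨a, ha, a', ha', b, hb, b', hb', hlt, hsum⟩ := not_disjoint_diffSet_iff.mp hAB
    have hpair : (a, b) = (a', b') := hinj (by simp [ha, hb]) (by simp [ha', hb']) hsum
    exact hlt.ne' (congrArg Prod.fst hpair)
  · intro hAB
    have collision_eq : ∀ a ∈ A, ∀ a' ∈ A, ∀ b ∈ B, ∀ b' ∈ B, a' ≤ a → a + b = a' + b' →
        a = a' ∧ b = b' := by
      intro a ha a' ha' b hb b' hb' hle hsum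
      obtain rfl | hlt := hle.eq_or_lt
      · exact ⟨rfl, by omega⟩
      · exact (not_disjoint_diffSet_iff.mpr ⟨a, ha, a', ha', b, hb, b', hb', hlt, hsum⟩ hAB).elim
    rintro ⟨a, b⟩ hab ⟨a', b'⟩ hab' hsum
    simp only [Set.mem_prod, mem_coe] at hab hab' hsum
    rcases le_total a' a with hle | hle
    · obtain ⟨rfl, rfl⟩ := collision_eq a hab.1 a' hab'.1 b hab.2 b' hab'.2 hle hsum
      rfl
    · obtain ⟨rfl, rfl⟩ := collision_eq a' hab'.1 a hab.1 b' hab'.2 b hab.2 hle hsum.symm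
      rfl

lemma card_add_eq_mul_iff_disjoint_diffSet {A B : Finset ℕ} :
    (A + B).card = A.card * B.card ↔ Disjoint (diffSet A) (diffSet B) :=
  card_add_iff.trans injOn_add_iff_disjoint_diffSet

theorem strongIASL_compl_iff_general {V : Type*} (G : SimpleGraph V)
    (f : V → Finset ℕ) (hf : IsStrongIASL G f) :
    IsStrongIASL Gᶜ f ↔
      ∀ u v : V, u ≠ v → Disjoint (diffSet (f u)) (diffSet (f v)) := by
  obtain ⟨hne, hinj, hG⟩ := hf
  constructor
  · rintro ⟨-, -, hGc⟩ u v huv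
    rw [← card_add_eq_mul_iff_disjoint_diffSet]
    by_cases hadj : G.Adj u v
    · exact hG u v hadj
    · exact hGc u v ⟨huv, hadj⟩
  · intro hdisj
    exact ⟨hne, hinj, fun u v hadj =>
      card_add_eq_mul_iff_disjoint_diffSet.mpr (hdisj u v hadj.ne)⟩

/-- A strong IASL `f` of `G` is also a strong IASL of the complement `Ḡ` iff the
difference sets of the set-labels of the vertices of `G` are pairwise disjoint. -/
theorem strongIASL_compl_iff {V : Type*} [Fintype V] (G : SimpleGraph V)
    (f : V → Finset ℕ) (hf : IsStrongIASL G f) :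
    IsStrongIASL Gᶜ f ↔
      ∀ u v : V, u ≠ v → Disjoint (diffSet (f u)) (diffSet (f v)) :=
  strongIASL_compl_iff_general G f hf
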